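/- arXiv:1903.10889 — 2 statements merged into one kernel-verified Lean document; each statement's English description precedes it below -/
import Mathlib

section
/- For r₁ > 1, r₂ > 1 and x₁, x₂ > 0, under the prior π(λ₁,λ₂) = 1/(λ₁λ₂) restricted to 0 < λ₂ ≤ λ₁, the normalizing constant of the joint posterior is C(r₁-1, x₁, r₂-1, x₂)/((r₁-1)(r₂-1)), where C(k₁,k₂,s₁,s₂) = ∫₀^∞ (1/ξ₁) m(s₁,s₂;ξ₁) IG_{k₁,k₂}(ξ₁) dξ₁ and m(s₁,s₂;ξ̄) = ∫₀^{ξ̄} (1/ξ) IG_{s₁,s₂}(ξ) dξ. That is, ∫₀^∞ ∫₀^{λ₁} (1/(λ₁λ₂)) p_{r₁,λ₁}(x₁) p_{r₂,λ₂}(x₂) dλ₂ dλ₁ = C(r₁-1, x₁, r₂-1, x₂)/((r₁-1)(r₂-1)). -/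
open Real MeasureTheory

/-- Inverse-gamma density `IG_{a,b}(ξ) = b^a ξ^{-a-1} e^{-b/ξ} / Γ(a)`. -/
noncomputable def invGammaPdf (a b ξ : ℝ) : ℝ :=
  b ^ a * ξ ^ (-a - 1) * Real.exp (-(b / ξ)) / Real.Gamma a

/-- Gamma density `p_{r,λ}(x) = x^{r-1} e^{-x/λ} / (Γ(r) λ^r)`. -/
noncomputable def gammaPdf (r lam x : ℝ) : ℝ :=
  x ^ (r - 1) * Real.exp (-(x / lam)) / (Real.Gamma r * lam ^ r)

/-- Truncated mixture `m(s₁, s₂; ξ̄) = ∫₀^{ξ̄} (1/ξ) IG_{s₁,s₂}(ξ) dξ`. -/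
noncomputable def mTrunc (s₁ s₂ ξbar : ℝ) : ℝ :=
  ∫ ξ in (0 : ℝ)..ξbar, (1 / ξ) * invGammaPdf s₁ s₂ ξ

/-- `C(k₁,k₂,s₁,s₂) = ∫₀^∞ (1/ξ₁) m(s₁,s₂;ξ₁) IG_{k₁,k₂}(ξ₁) dξ₁`. -/
noncomputable def Cmix (k₁ k₂ s₁ s₂ : ℝ) : ℝ :=
  ∫ ξ₁ in Set.Ioi (0 : ℝ), (1 / ξ₁) * mTrunc s₁ s₂ ξ₁ * invGammaPdf k₁ k₂ ξ₁

/-! Since `Γ(r) = (r - 1) Γ(r - 1)`, the gamma density `p_{r,λ}(x)`, read as a function of its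
scale `λ > 0`, equals `IG_{r-1,x}(λ) / (r - 1)`. Substituting this for both densities turns the
double integral into the definition of `C` pointwise, so no integrability argument is needed. -/

lemma gammaPdf_eq_invGammaPdf_div {r : ℝ} (hr : r ≠ 1) (x : ℝ) {lam : ℝ} (hlam : 0 < lam) :
    gammaPdf r lam x = invGammaPdf (r - 1) x lam / (r - 1) := by
  have hr₀ : r - 1 ≠ 0 := sub_ne_zero.mpr hr
  have hGamma : Gamma r = (r - 1) * Gamma (r - 1) := by
    simpa using Gamma_add_one hr₀
  have hpow : lam ^ (-(r - 1) - 1) = (lam ^ r)⁻¹ := by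
    rw [show -(r - 1) - 1 = -r by ring, rpow_neg hlam.le]
  have hlam_pow : lam ^ r ≠ 0 := by positivity
  unfold gammaPdf invGammaPdf
  rw [hpow, hGamma]
  field_simp

lemma integral_inv_mul_gammaPdf {r : ℝ} (hr : r ≠ 1) (x : ℝ) {ξ : ℝ} (hξ : 0 ≤ ξ) :
    ∫ lam in (0 : ℝ)..ξ, (1 / lam) * gammaPdf r lam x = mTrunc (r - 1) x ξ / (r - 1) := by
  rw [mTrunc, ← intervalIntegral.integral_div]
  refine intervalIntegral.integral_congr_ae (ae_of_all _ fun lam hlam => ?_)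
  rw [Set.uIoc_of_le hξ] at hlam
  rw [gammaPdf_eq_invGammaPdf_div hr x hlam.1, mul_div_assoc]

lemma integral_inv_mul_gammaPdf_mul_gammaPdf {r₁ r₂ : ℝ} (hr₁ : r₁ ≠ 1) (hr₂ : r₂ ≠ 1) (x₁ x₂ : ℝ)
    {lam₁ : ℝ} (hlam₁ : 0 < lam₁) :
    ∫ lam₂ in (0 : ℝ)..lam₁, (1 / (lam₁ * lam₂)) * gammaPdf r₁ lam₁ x₁ * gammaPdf r₂ lam₂ x₂ =
      (1 / lam₁) * mTrunc (r₂ - 1) x₂ lam₁ * invGammaPdf (r₁ - 1) x₁ lam₁ /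
        ((r₁ - 1) * (r₂ - 1)) := by
  have hsplit : ∀ lam₂ : ℝ, (1 / (lam₁ * lam₂)) * gammaPdf r₁ lam₁ x₁ * gammaPdf r₂ lam₂ x₂ =
      (1 / lam₁ * gammaPdf r₁ lam₁ x₁) * ((1 / lam₂) * gammaPdf r₂ lam₂ x₂) := fun lam₂ => by ring
  simp_rw [hsplit]
  rw [intervalIntegral.integral_const_mul, integral_inv_mul_gammaPdf hr₂ x₂ hlam₁.le,
    gammaPdf_eq_invGammaPdf_div hr₁ x₁ hlam₁]
  have hr₁' : r₁ - 1 ≠ 0 := sub_ne_zero.mpr hr₁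
  have hr₂' : r₂ - 1 ≠ 0 := sub_ne_zero.mpr hr₂
  field_simp

theorem joint_posterior_normalizing_constant_general (r₁ r₂ x₁ x₂ : ℝ)
    (hr₁ : 1 < r₁) (hr₂ : 1 < r₂) :
    ∫ lam₁ in Set.Ioi (0 : ℝ),
        ∫ lam₂ in (0 : ℝ)..lam₁,
          (1 / (lam₁ * lam₂)) * gammaPdf r₁ lam₁ x₁ * gammaPdf r₂ lam₂ x₂ =
      Cmix (r₁ - 1) x₁ (r₂ - 1) x₂ / ((r₁ - 1) * (r₂ - 1)) := by
  rw [setIntegral_congr_fun measurableSet_Ioi fun lam₁ hlam₁ =>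
      integral_inv_mul_gammaPdf_mul_gammaPdf hr₁.ne' hr₂.ne' x₁ x₂ hlam₁,
    integral_div, Cmix]

theorem joint_posterior_normalizing_constant (r₁ r₂ x₁ x₂ : ℝ)
    (hr₁ : 1 < r₁) (hr₂ : 1 < r₂) (hx₁ : 0 < x₁) (hx₂ : 0 < x₂) :
    ∫ lam₁ in Set.Ioi (0 : ℝ),
        ∫ lam₂ in (0 : ℝ)..lam₁,
          (1 / (lam₁ * lam₂)) * gammaPdf r₁ lam₁ x₁ * gammaPdf r₂ lam₂ x₂ =
      Cmix (r₁ - 1) x₁ (r₂ - 1) x₂ / ((r₁ - 1) * (r₂ - 1)) :=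
  joint_posterior_normalizing_constant_general r₁ r₂ x₁ x₂ hr₁ hr₂
end

section
/- For k₁ > 0, s₁ > 0, k₂ > 0, s₂ > 0, the double-prior mixture C(k₁, k₂, s₁, s₂) = ∫₀^∞ (1/ξ₁) m(s₁, s₂; ξ₁) IG_{k₁,k₂}(ξ₁) dξ₁, with m(s₁,s₂;ξ₁) = Γ(s₁+1, s₂/ξ₁)/(s₂ Γ(s₁)), equals k₁ k₂^{k₁} s₂^{-k₁-2} Γ(k₁+s₁+2) · ₂F̃₁(k₁+1, k₁+s₁+2; k₁+2; -k₂/s₂) / Γ(s₁), where ₂F̃₁ is the regularized Gauss hypergeometric function (analytically continued to negative argument). -/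
/-!
Substituting `u = 1/ξ₁` turns the mixture into `∫₀^∞ u^(k₁+s₁+1) e^(-k₂ u) Γ(s₁+1, s₂ u) du`
up to a constant. Writing `Γ(s₁+1, x) = x^(s₁+1) ∫₁^∞ v^s₁ e^(-x v) dv` and swapping the two
integrals (Tonelli), the `u`-integral is a Gamma integral, leaving
`Γ(k₁+s₁+2) ∫₁^∞ v^s₁ (k₂ + s₂ v)^(-(k₁+s₁+2)) dv`. The substitution `v = 1/t` turns this into
Euler's integral for `₂F̃₁(k₁+1, k₁+s₁+2; k₁+2; -k₂/s₂)`, whose `(1-t)`-factor is trivial since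
`c = a + 1`.
-/

open Real MeasureTheory

/-- Upper incomplete gamma function `Γ(m, n) = ∫_n^∞ t^{m-1} e^{-t} dt`. -/
noncomputable def upperGamma (m n : ℝ) : ℝ :=
  ∫ t in Set.Ioi n, t ^ (m - 1) * Real.exp (-t)

/-- Regularized Gauss hypergeometric function `₂F̃₁(a,b;c;z) = ₂F₁(a,b;c;z)/Γ(c)`,
given (for `c - a > 0`, `a > 0`, real `z < 1`, in particular negative `z`) by the
Euler integral representation, which provides the analytic continuation:
`₂F̃₁(a,b;c;z) = (1/(Γ(a)Γ(c-a))) ∫₀¹ t^{a-1} (1-t)^{c-a-1} (1-zt)^{-b} dt`. -/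
noncomputable def reg2F1 (a b c z : ℝ) : ℝ :=
  (1 / (Real.Gamma a * Real.Gamma (c - a))) *
    ∫ t in (0 : ℝ)..1, t ^ (a - 1) * (1 - t) ^ (c - a - 1) * (1 - z * t) ^ (-b)

section Tonelli

variable {α β : Type*} [MeasurableSpace α] [MeasurableSpace β] {μ : Measure α} {ν : Measure β}
  [SFinite ν]

lemma integral_integral_eq_toReal_lintegral_lintegral {F : α → β → ℝ}
    (hF : Measurable (Function.uncurry F)) (hF0 : ∀ᵐ x ∂μ, ∀ᵐ y ∂ν, 0 ≤ F x y)
    (hFi : ∀ᵐ x ∂μ, Integrable (F x) ν) :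
    ∫ x, ∫ y, F x y ∂ν ∂μ = (∫⁻ x, ∫⁻ y, ENNReal.ofReal (F x y) ∂ν ∂μ).toReal := by
  rw [integral_eq_lintegral_of_nonneg_ae (hF0.mono fun x hx => integral_nonneg_of_ae hx)
    hF.stronglyMeasurable.integral_prod_right'.aestronglyMeasurable]
  congr 1
  refine lintegral_congr_ae ?_
  filter_upwards [hF0, hFi] with x hx0 hxi
  exact ofReal_integral_eq_lintegral_ofReal hxi hx0

/-- Tonelli for real-valued functions: both sides are `toReal` of the same iterated `lintegral`,
so no integrability of the outer integrands is needed (if that `lintegral` is `∞`, both are `0`). -/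
lemma integral_integral_swap_of_nonneg [SFinite μ] {F : α → β → ℝ}
    (hF : Measurable (Function.uncurry F)) (hF0 : ∀ᵐ x ∂μ, ∀ᵐ y ∂ν, 0 ≤ F x y)
    (hFx : ∀ᵐ x ∂μ, Integrable (F x) ν) (hFy : ∀ᵐ y ∂ν, Integrable (fun x => F x y) μ) :
    ∫ x, ∫ y, F x y ∂ν ∂μ = ∫ y, ∫ x, F x y ∂μ ∂ν := by
  have hF0' : ∀ᵐ y ∂ν, ∀ᵐ x ∂μ, 0 ≤ F x y :=
    (Measure.ae_ae_comm (p := fun x y => 0 ≤ F x y) (measurableSet_le measurable_const hF)).1 hF0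
  rw [integral_integral_eq_toReal_lintegral_lintegral hF hF0 hFx,
    integral_integral_eq_toReal_lintegral_lintegral (F := Function.swap F)
      (hF.comp measurable_swap) hF0' hFy,
    lintegral_lintegral_swap hF.ennreal_ofReal.aemeasurable]

end Tonelli

lemma integral_image_inv {E : Type*} [NormedAddCommGroup E] [NormedSpace ℝ E] {s : Set ℝ}
    (hs : MeasurableSet s) (h0 : (0 : ℝ) ∉ s) (g : ℝ → E) :
    ∫ y in Inv.inv '' s, g y = ∫ x in s, (x ^ 2)⁻¹ • g x⁻¹ := by
  rw [integral_image_eq_integral_abs_deriv_smul hs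
    (fun x hx => (hasDerivAt_inv (ne_of_mem_of_not_mem hx h0)).hasDerivWithinAt)
    inv_injective.injOn g]
  simp only [abs_neg, abs_inv, abs_pow, sq_abs]

lemma image_inv_Ioi_zero : Inv.inv '' Set.Ioi (0 : ℝ) = Set.Ioi 0 := by
  ext x; simp

lemma image_inv_Ioo_zero_one : Inv.inv '' Set.Ioo (0 : ℝ) 1 = Set.Ioi 1 := by
  rw [Set.image_inv_eq_inv, Set.inv_Ioo_0_left one_pos, inv_one]

lemma upperGamma_eq_rpow_mul_integral_Ioi_one (a : ℝ) {x : ℝ} (hx : 0 < x) :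
    upperGamma a x = x ^ a * ∫ v in Set.Ioi 1, v ^ (a - 1) * Real.exp (-(x * v)) := by
  have h := integral_comp_mul_left_Ioi (fun t => t ^ (a - 1) * Real.exp (-t)) 1 hx
  rw [mul_one, smul_eq_mul, eq_inv_mul_iff_mul_eq₀ hx.ne'] at h
  rw [upperGamma, ← h, ← integral_const_mul, ← integral_const_mul]
  refine setIntegral_congr_fun measurableSet_Ioi fun v hv => ?_
  rw [Real.mul_rpow hx.le (zero_lt_one.trans hv).le, Real.rpow_sub_one hx.ne']
  field_simp

lemma integrableOn_rpow_mul_exp_neg_mul_Ioi {s r : ℝ} (hs : -1 < s) (hr : 0 < r) :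
    IntegrableOn (fun x : ℝ => x ^ s * Real.exp (-(r * x))) (Set.Ioi 0) := by
  simpa only [Real.rpow_one, neg_mul] using integrableOn_rpow_mul_exp_neg_mul_rpow hs one_pos hr

lemma integral_rpow_mul_exp_mul_integral_Ioi_one {a s p q : ℝ} (ha : 0 < a) (hs : -1 < s)
    (hp : 0 < p) (hq : 0 < q) :
    ∫ u in Set.Ioi 0, u ^ (a - 1) * Real.exp (-(p * u)) *
        ∫ v in Set.Ioi 1, v ^ s * Real.exp (-(q * u * v)) =
      Real.Gamma a * ∫ v in Set.Ioi 1, v ^ s * (p + q * v) ^ (-a) := by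
  set F : ℝ → ℝ → ℝ := fun u v => u ^ (a - 1) * Real.exp (-(p * u)) *
    (v ^ s * Real.exp (-(q * u * v))) with hF
  have hF_eq (u v : ℝ) : F u v = v ^ s * (u ^ (a - 1) * Real.exp (-((p + q * v) * u))) := by
    rw [hF, show -((p + q * v) * u) = -(p * u) + -(q * u * v) by ring, Real.exp_add]
    ring
  have hpqv {v : ℝ} (hv : v ∈ Set.Ioi 1) : 0 < p + q * v := by
    have : (0 : ℝ) < v := zero_lt_one.trans hv
    positivity
  have hF_nonneg : ∀ᵐ u ∂volume.restrict (Set.Ioi 0), ∀ᵐ v ∂volume.restrict (Set.Ioi 1),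
      0 ≤ F u v := by
    refine (ae_restrict_iff' measurableSet_Ioi).2 (.of_forall fun u (hu : 0 < u) => ?_)
    refine (ae_restrict_iff' measurableSet_Ioi).2 (.of_forall fun v (hv : 1 < v) => ?_)
    have : (0 : ℝ) < v := zero_lt_one.trans hv
    positivity
  have hF_int_v :
      ∀ᵐ u ∂volume.restrict (Set.Ioi 0), Integrable (F u) (volume.restrict (Set.Ioi 1)) :=
    (ae_restrict_iff' measurableSet_Ioi).2 (.of_forall fun u (hu : 0 < u) =>
      ((integrableOn_rpow_mul_exp_neg_mul_Ioi hs (mul_pos hq hu)).mono_set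
        (Set.Ioi_subset_Ioi zero_le_one)).const_mul _)
  have hF_int_u : ∀ᵐ v ∂volume.restrict (Set.Ioi 1),
      Integrable (fun u => F u v) (volume.restrict (Set.Ioi 0)) :=
    (ae_restrict_iff' measurableSet_Ioi).2 (.of_forall fun v hv => by
      simpa only [hF_eq] using
        (integrableOn_rpow_mul_exp_neg_mul_Ioi (by linarith) (hpqv hv)).const_mul (v ^ s))
  calc _ = ∫ u in Set.Ioi 0, ∫ v in Set.Ioi 1, F u v := by simp only [hF, integral_const_mul]
    _ = ∫ v in Set.Ioi 1, ∫ u in Set.Ioi 0, F u v :=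
      integral_integral_swap_of_nonneg (by fun_prop) hF_nonneg hF_int_v hF_int_u
    _ = ∫ v in Set.Ioi 1, Real.Gamma a * (v ^ s * (p + q * v) ^ (-a)) := by
      refine setIntegral_congr_fun measurableSet_Ioi fun v hv => ?_
      simp only [hF_eq]
      rw [integral_const_mul, integral_rpow_mul_exp_neg_mul_Ioi ha (hpqv hv), one_div,
        Real.inv_rpow (hpqv hv).le, ← Real.rpow_neg (hpqv hv).le]
      ring
    _ = _ := integral_const_mul _ _

lemma integral_Ioi_one_rpow_mul_add_mul_rpow_neg {r s p q : ℝ} (hp : 0 ≤ p) (hq : 0 < q) :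
    ∫ v in Set.Ioi 1, v ^ s * (p + q * v) ^ (-(r + s + 2)) =
      q ^ (-(r + s + 2)) * ∫ t in Set.Ioo 0 1, t ^ r * (1 + p / q * t) ^ (-(r + s + 2)) := by
  rw [← image_inv_Ioo_zero_one, integral_image_inv measurableSet_Ioo (by simp),
    ← integral_const_mul]
  refine setIntegral_congr_fun measurableSet_Ioo fun t ⟨ht, _⟩ => ?_
  have hpt : 0 ≤ 1 + p / q * t := by positivity
  have hsplit : p + q * t⁻¹ = q * t⁻¹ * (1 + p / q * t) := by
    field_simp
    ring
  have hpow : (t ^ 2)⁻¹ * (t⁻¹ ^ s * t⁻¹ ^ (-(r + s + 2))) = t ^ r := by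
    simp only [Real.inv_rpow ht.le, ← Real.rpow_natCast, ← Real.rpow_neg ht.le,
      ← Real.rpow_add ht]
    ring_nf
  rw [smul_eq_mul, hsplit, Real.mul_rpow (by positivity) hpt, Real.mul_rpow hq.le (by positivity),
    ← hpow]
  ring

lemma reg2F1_add_one_neg (a b z : ℝ) :
    reg2F1 a b (a + 1) (-z) =
      (∫ t in Set.Ioo 0 1, t ^ (a - 1) * (1 + z * t) ^ (-b)) / Real.Gamma a := by
  rw [reg2F1, add_sub_cancel_left, sub_self, Real.Gamma_one, mul_one,
    intervalIntegral.integral_of_le zero_le_one, integral_Ioc_eq_integral_Ioo]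
  simp only [Real.rpow_zero, mul_one, neg_mul, sub_neg_eq_add]
  ring

lemma mixture_integrand_comp_inv {k₁ k₂ s₁ s₂ u : ℝ} (hs₂ : 0 < s₂) (hu : 0 < u) :
    (u ^ 2)⁻¹ • ((1 / u⁻¹) * (upperGamma (s₁ + 1) (s₂ / u⁻¹) / (s₂ * Real.Gamma s₁)) *
        invGammaPdf k₁ k₂ u⁻¹) =
      s₂ ^ s₁ * k₂ ^ k₁ / (Real.Gamma s₁ * Real.Gamma k₁) *
        (u ^ (k₁ + s₁ + 2 - 1) * Real.exp (-(k₂ * u)) *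
          ∫ v in Set.Ioi 1, v ^ s₁ * Real.exp (-(s₂ * u * v))) := by
  have hpow : u ^ (k₁ + s₁ + 2 - 1) = u ^ (s₁ + 1) * u⁻¹ ^ (-k₁ - 1) * u⁻¹ := by
    rw [Real.inv_rpow hu.le, ← Real.rpow_neg hu.le, ← Real.rpow_neg_one, ← Real.rpow_add hu,
      ← Real.rpow_add hu]
    ring_nf
  simp only [invGammaPdf, div_inv_eq_mul, one_mul, smul_eq_mul]
  rw [upperGamma_eq_rpow_mul_integral_Ioi_one _ (mul_pos hs₂ hu), add_sub_cancel_right,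
    Real.mul_rpow hs₂.le hu.le, Real.rpow_add_one hs₂.ne', hpow]
  field_simp

theorem double_prior_mixture_closed_form (k₁ k₂ s₁ s₂ : ℝ)
    (hk₁ : 0 < k₁) (hk₂ : 0 < k₂) (hs₁ : 0 < s₁) (hs₂ : 0 < s₂) :
    ∫ ξ₁ in Set.Ioi (0 : ℝ),
        (1 / ξ₁) * (upperGamma (s₁ + 1) (s₂ / ξ₁) / (s₂ * Real.Gamma s₁)) *
          invGammaPdf k₁ k₂ ξ₁ =
      k₁ * k₂ ^ k₁ * s₂ ^ (-k₁ - 2) * Real.Gamma (k₁ + s₁ + 2) *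
        reg2F1 (k₁ + 1) (k₁ + s₁ + 2) (k₁ + 2) (-(k₂ / s₂)) / Real.Gamma s₁ := by
  rw [← image_inv_Ioi_zero, integral_image_inv measurableSet_Ioi (by simp),
    setIntegral_congr_fun measurableSet_Ioi fun u hu => mixture_integrand_comp_inv hs₂ hu,
    integral_const_mul, integral_rpow_mul_exp_mul_integral_Ioi_one (by positivity)
      (by linarith) hk₂ hs₂, integral_Ioi_one_rpow_mul_add_mul_rpow_neg hk₂.le hs₂,
    show k₁ + 2 = k₁ + 1 + 1 by ring, reg2F1_add_one_neg, add_sub_cancel_right,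
    Real.Gamma_add_one hk₁.ne',
    show -k₁ - 2 = s₁ + -(k₁ + s₁ + 2) by ring, Real.rpow_add hs₂]
  field_simp
end
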